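/- Let j ≥ g ≥ 2 be integers and 0 < p < 1 with g·p ≥ 8. Then the probability that the Erdős–Rényi graph G(j, p) has no connected component on at least j − g/2 vertices is at most (1−p)^{j − g/2} + Σ_{g/2 ≤ m ≤ j/2} (2e·j·(1−p)^{j/2}/g)^m. -/

import Mathlib

/-!
If every component of `G(j,p)` has fewer than `j - g/2` vertices, a minimal union of components
with at least `⌈g/4⌉` vertices is still small, so it or its complement is a set `S` with
`⌈g/4⌉ ≤ |S| ≤ j/2` and no edge leaving it; for a fixed `S` this has probability
`(1-p)^{|S|(j-|S|)}`. The union bound gives `∑ₘ C(j,m) (1-p)^{m(j-m)}`. Using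
`C(j,m) ≤ (e j/m)^m`, the terms with `m ≥ g/2` are at most `(2e j (1-p)^{j/2}/g)^m`, while for
`g/4 ≤ m < g/2` the exponent `m(j-m)` exceeds `j - g/2` by at least `(m-1) j/2`, and `gp ≥ 8`
turns this surplus into a factor `exp(-4(m-1) j/g)` that makes these terms sum to at most
`(1-p)^{j-g/2}`.
-/

open MeasureTheory Real
open scoped Classical ENNReal

/-- Uniform measure on `[0,1]`. -/
noncomputable def unitIv : Measure ℝ := volume.restrict (Set.Icc 0 1)

/-- Sample space for the Erdős–Rényi graph `G(n,p)`: an independent uniform `[0,1]`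
label for each pair, used as the coin flip. -/
abbrev ErSpace (n : ℕ) := Fin n → Fin n → ℝ

noncomputable def erMeasure (n : ℕ) : Measure (ErSpace n) :=
  Measure.pi fun _ => Measure.pi fun _ => unitIv

/-- The Erdős–Rényi graph `G(n,p)`: each pair is an edge independently with
probability `p`. -/
def erGraph (n : ℕ) (p : ℝ) (ω : ErSpace n) : SimpleGraph (Fin n) where
  Adj i j := i ≠ j ∧ ω (min i j) (max i j) ≤ p
  symm := ⟨by rintro i j ⟨h1, h2⟩; exact ⟨h1.symm, by rwa [min_comm, max_comm]⟩⟩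
  loopless := ⟨by rintro i ⟨h1, -⟩; exact h1 rfl⟩

open Finset

instance : IsProbabilityMeasure unitIv :=
  ⟨by simp [unitIv, Real.volume_Icc]⟩

lemma unitIv_Ioi {p : ℝ} (hp : 0 ≤ p) : unitIv (Set.Ioi p) = ENNReal.ofReal (1 - p) := by
  have : Set.Ioi p ∩ Set.Icc 0 1 = Set.Ioc p 1 := by
    ext x
    simp only [Set.mem_inter_iff, Set.mem_Ioi, Set.mem_Icc, Set.mem_Ioc]
    grind
  rw [unitIv, Measure.restrict_apply measurableSet_Ioi, this, Real.volume_Ioc]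

lemma erMeasure_forall_lt {n : ℕ} {p : ℝ} (hp : 0 ≤ p) (T : Finset (Fin n × Fin n)) :
    erMeasure n {ω | ∀ q ∈ T, p < ω q.1 q.2} = ENNReal.ofReal (1 - p) ^ #T := by
  have hpi : {ω : ErSpace n | ∀ q ∈ T, p < ω q.1 q.2} =
      Set.univ.pi fun i => Set.univ.pi fun l => if (i, l) ∈ T then Set.Ioi p else Set.univ := by
    ext ω
    simp only [Set.mem_ofPred_eq, Set.mem_pi, Set.mem_univ, true_implies]
    refine ⟨fun h i l => ?_, fun h q hq => ?_⟩
    · split_ifs with hil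
      exacts [h _ hil, trivial]
    · simpa [hq] using h q.1 q.2
  simp only [hpi, erMeasure, Measure.pi_pi, apply_ite, unitIv_Ioi hp, measure_univ]
  rw [← prod_product' (f := fun i l => if (i, l) ∈ T then ENNReal.ofReal (1 - p) else 1)]
  simp [prod_ite_mem]

lemma card_image_min_max_product_compl (n : ℕ) (S : Finset (Fin n)) :
    #((S ×ˢ Sᶜ).image fun q => (min q.1 q.2, max q.1 q.2)) = #S * (n - #S) := by
  rw [card_image_of_injOn, card_product, card_compl, Fintype.card_fin]
  rintro ⟨a, b⟩ hab ⟨a', b'⟩ hab' h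
  simp only [coe_product, Set.mem_prod, mem_coe, mem_compl, Prod.mk.injEq] at hab hab' h
  rcases le_total a b with h1 | h1 <;> rcases le_total a' b' with h2 | h2 <;>
    simp only [min_eq_left, min_eq_right, max_eq_left, max_eq_right, h1, h2] at h <;>
    obtain ⟨rfl, rfl⟩ := h <;> simp_all

def noEdgeLeaving (n : ℕ) (p : ℝ) (S : Finset (Fin n)) : Set (ErSpace n) :=
  {ω | ∀ a ∈ S, ∀ b ∉ S, ¬ (erGraph n p ω).Adj a b}

lemma erMeasure_noEdgeLeaving_le {n : ℕ} {p : ℝ} (hp : 0 ≤ p) (hp1 : p ≤ 1)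
    (S : Finset (Fin n)) :
    erMeasure n (noEdgeLeaving n p S) ≤ ENNReal.ofReal ((1 - p) ^ (#S * (n - #S))) := by
  set T := (S ×ˢ Sᶜ).image fun q => (min q.1 q.2, max q.1 q.2)
  calc erMeasure n (noEdgeLeaving n p S) ≤ erMeasure n {ω | ∀ q ∈ T, p < ω q.1 q.2} := by
        refine measure_mono fun ω hω => ?_
        simp only [T, Set.mem_ofPred_eq, forall_mem_image, mem_product, mem_compl, Prod.forall,
          and_imp]
        intro a b ha hb
        have hab : a ≠ b := fun h => hb (h ▸ ha)
        simpa [erGraph, hab] using hω a ha b hb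
    _ = ENNReal.ofReal ((1 - p) ^ (#S * (n - #S))) := by
        rw [erMeasure_forall_lt hp, card_image_min_max_product_compl,
          ENNReal.ofReal_pow (by linarith)]

lemma erMeasure_biUnion_noEdgeLeaving_le {n : ℕ} {p : ℝ} (hp : 0 ≤ p) (hp1 : p ≤ 1)
    (M : Finset ℕ) :
    erMeasure n (⋃ m ∈ M, ⋃ S ∈ powersetCard m (univ : Finset (Fin n)), noEdgeLeaving n p S) ≤
      ENNReal.ofReal (∑ m ∈ M, (n.choose m : ℝ) * (1 - p) ^ (m * (n - m))) := by
  calc _ ≤ ∑ m ∈ M, ∑ S ∈ powersetCard m (univ : Finset (Fin n)),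
        erMeasure n (noEdgeLeaving n p S) :=
        (measure_biUnion_finset_le _ _).trans (sum_le_sum fun _ _ => measure_biUnion_finset_le _ _)
    _ ≤ ∑ m ∈ M, ∑ S ∈ powersetCard m (univ : Finset (Fin n)),
        ENNReal.ofReal ((1 - p) ^ (m * (n - m))) := by
        refine sum_le_sum fun m _ => sum_le_sum fun S hS => ?_
        rw [← (mem_powersetCard.1 hS).2]
        exact erMeasure_noEdgeLeaving_le hp hp1 S
    _ = _ := by
        rw [ENNReal.ofReal_sum_of_nonneg fun m _ => by positivity]
        refine sum_congr rfl fun m _ => ?_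
        rw [sum_const, card_powersetCard, card_univ, Fintype.card_fin, nsmul_eq_mul,
          ENNReal.ofReal_mul (by positivity), ENNReal.ofReal_natCast]

section Cuts

variable {V : Type*} [Fintype V] {G : SimpleGraph V}

lemma SimpleGraph.exists_reachable_closed_card_lt {A C : ℕ} (hA : 1 ≤ A)
    (hAV : A ≤ Fintype.card V) (hC : ∀ c : G.ConnectedComponent, c.supp.ncard ≤ C) :
    ∃ S : Finset V, (∀ a ∈ S, ∀ b, G.Reachable a b → b ∈ S) ∧ A ≤ #S ∧ #S < A + C := by
  obtain ⟨S, hS, hmin⟩ := (univ.powerset.filter fun S : Finset V =>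
      (∀ a ∈ S, ∀ b, G.Reachable a b → b ∈ S) ∧ A ≤ #S).exists_min_image card
    ⟨univ, by simpa using hAV⟩
  simp only [mem_filter, mem_powerset, subset_univ, true_and, and_imp] at hS hmin
  obtain ⟨hSclosed, hAS⟩ := hS
  refine ⟨S, hSclosed, hAS, ?_⟩
  obtain ⟨a, ha⟩ : S.Nonempty := card_pos.1 (by omega)
  set K := (G.connectedComponentMk a).supp.toFinset
  have hmemK : ∀ w, w ∈ K ↔ G.Reachable w a := by
    simp [K, SimpleGraph.ConnectedComponent.eq]
  have hKS : K ⊆ S := fun w hw => hSclosed a ha w ((hmemK w).1 hw).symm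
  have hK : #K ≤ C := by
    rw [← Set.ncard_eq_toFinset_card']
    exact hC _
  -- removing the component of `a` from a minimal `S` leaves a closed set that is too small
  have hsmall : #(S \ K) < A := by
    by_contra! h
    have hclosed : ∀ x ∈ S \ K, ∀ y, G.Reachable x y → y ∈ S \ K := by
      intro x hx y hxy
      simp only [mem_sdiff, hmemK] at hx ⊢
      exact ⟨hSclosed x hx.1 y hxy, fun hya => hx.2 (hxy.trans hya)⟩
    have := hmin _ hclosed h
    have := card_lt_card (sdiff_ssubset hKS ⟨a, (hmemK a).2 .rfl⟩)
    omega
  rw [card_sdiff_of_subset hKS] at hsmall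
  have := card_le_card hKS
  omega

lemma SimpleGraph.exists_finset_not_adj_compl {A C : ℕ} (hA : 1 ≤ A)
    (hAC : 2 * A + C ≤ Fintype.card V + 1)
    (hC : ∀ c : G.ConnectedComponent, c.supp.ncard ≤ C) :
    ∃ S : Finset V, A ≤ #S ∧ 2 * #S ≤ Fintype.card V ∧ ∀ a ∈ S, ∀ b ∉ S, ¬ G.Adj a b := by
  obtain ⟨S, hS, hAS, hSC⟩ := G.exists_reachable_closed_card_lt hA (by omega) hC
  by_cases hhalf : 2 * #S ≤ Fintype.card V
  · exact ⟨S, hAS, hhalf, fun a ha b hb hab => hb (hS a ha b hab.reachable)⟩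
  · refine ⟨Sᶜ, ?_, ?_, fun a ha b hb hab => ?_⟩
    · rw [card_compl]; omega
    · rw [card_compl]; omega
    · rw [mem_compl, not_not] at hb
      exact (mem_compl.1 ha) (hS b hb a hab.symm.reachable)

end Cuts

lemma Nat.choose_le_exp_one_mul_div_pow (n k : ℕ) :
    (n.choose k : ℝ) ≤ (exp 1 * n / k) ^ k := by
  rcases k.eq_zero_or_pos with rfl | hk
  · simp
  have hk' : (0 : ℝ) < k := by exact_mod_cast hk
  have hfac : (0 : ℝ) < k.factorial := by exact_mod_cast k.factorial_pos
  have hkk : (k : ℝ) ^ k ≤ exp 1 ^ k * k.factorial := by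
    rw [exp_one_pow, ← div_le_iff₀ hfac]
    exact Real.pow_div_factorial_le_exp (x := k) hk'.le k
  calc (n.choose k : ℝ) ≤ n ^ k / k.factorial := Nat.choose_le_pow_div k n
    _ ≤ (exp 1 * n / k) ^ k := by
      rw [div_pow, mul_pow, div_le_div_iff₀ hfac (by positivity)]
      calc (n : ℝ) ^ k * k ^ k ≤ n ^ k * (exp 1 ^ k * k.factorial) := by gcongr
        _ = _ := by ring

lemma choose_mul_one_sub_pow_le_of_le_two_mul {j g m : ℕ} {p : ℝ} (hp : 0 ≤ p) (hp1 : p < 1)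
    (hg : 0 < g) (hgm : g ≤ 2 * m) (hmj : 2 * m ≤ j) :
    (j.choose m : ℝ) * (1 - p) ^ (m * (j - m)) ≤
      (2 * exp 1 * j * (1 - p) ^ ((j : ℝ) / 2) / g) ^ m := by
  have hg' : (0 : ℝ) < g := by exact_mod_cast hg
  have hgm' : (g : ℝ) ≤ 2 * m := by exact_mod_cast hgm
  have hmj' : 2 * (m : ℝ) ≤ j := by exact_mod_cast hmj
  have hchoose : (j.choose m : ℝ) ≤ (2 * exp 1 * j / g) ^ m := by
    refine (Nat.choose_le_exp_one_mul_div_pow j m).trans (pow_le_pow_left₀ (by positivity) ?_ m)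
    rw [div_le_div_iff₀ (by linarith) hg']
    nlinarith [exp_pos 1, mul_nonneg (exp_pos 1).le (Nat.cast_nonneg (α := ℝ) j)]
  have hpow : (1 - p) ^ (m * (j - m)) ≤ ((1 - p) ^ ((j : ℝ) / 2)) ^ m := by
    rw [mul_comm, pow_mul, ← rpow_natCast (1 - p) (j - m)]
    refine pow_le_pow_left₀ (by positivity) (rpow_le_rpow_of_exponent_ge (by linarith)
      (by linarith) ?_) m
    rw [Nat.cast_sub (by omega)]
    linarith
  calc (j.choose m : ℝ) * (1 - p) ^ (m * (j - m))
      ≤ (2 * exp 1 * j / g) ^ m * ((1 - p) ^ ((j : ℝ) / 2)) ^ m :=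
        mul_le_mul hchoose hpow (by positivity) (by positivity)
    _ = _ := by rw [← mul_pow]; ring

lemma twenty_le_exp_three : (20 : ℝ) ≤ exp 3 := by
  rw [show (3 : ℝ) = (3 : ℕ) by norm_num, ← exp_one_pow]
  calc (20 : ℝ) ≤ 2.7182818283 ^ 3 := by norm_num
    _ ≤ exp 1 ^ 3 := pow_le_pow_left₀ (by norm_num) exp_one_gt_d9.le 3

lemma four_mul_exp_pow_mul_exp_le {u : ℝ} (hu : 1 ≤ u) {m : ℕ} (hm : 2 ≤ m) :
    (4 * exp u) ^ m * exp (-(4 * (m - 1) * u)) ≤ exp 4 * (1 / 5) ^ m := by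
  have hm' : (2 : ℝ) ≤ m := by exact_mod_cast hm
  have hexp : u * m - 4 * (m - 1) * u ≤ 4 + m * (-3) := by nlinarith
  calc (4 * exp u) ^ m * exp (-(4 * (m - 1) * u))
      = 4 ^ m * exp (u * m - 4 * (m - 1) * u) := by
        rw [mul_pow, ← exp_nat_mul, mul_assoc, ← exp_add]
        ring_nf
    _ ≤ 4 ^ m * exp (4 + m * (-3)) := by gcongr
    _ = exp 4 * (4 * exp (-3)) ^ m := by
        rw [exp_add, exp_nat_mul, mul_pow]
        ring
    _ ≤ exp 4 * (1 / 5) ^ m := by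
        gcongr
        rw [exp_neg, ← div_eq_mul_inv, div_le_iff₀ (exp_pos 3)]
        linarith [twenty_le_exp_three]

lemma choose_mul_one_sub_pow_le_of_two_mul_lt {j g m : ℕ} {p : ℝ} (hp : 0 ≤ p) (hp1 : p < 1)
    (hgp : 8 ≤ g * p) (hm : 2 ≤ m) (hgm : g ≤ 4 * m) (hmg : 2 * m < g) (hgj : g ≤ j) :
    (j.choose m : ℝ) * (1 - p) ^ (m * (j - m)) ≤
      (1 - p) ^ ((j : ℝ) - g / 2) * (exp 4 * (1 / 5) ^ m) := by
  have hm' : (2 : ℝ) ≤ m := by exact_mod_cast hm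
  have hgm' : (g : ℝ) ≤ 4 * m := by exact_mod_cast hgm
  have hmg' : 2 * (m : ℝ) < g := by exact_mod_cast hmg
  have hgj' : (g : ℝ) ≤ j := by exact_mod_cast hgj
  have hg : (0 : ℝ) < g := by linarith
  set u : ℝ := j / g
  have hu : 1 ≤ u := (one_le_div hg).2 hgj'
  have hj : (j : ℝ) = u * g := (div_mul_cancel₀ _ hg.ne').symm
  have hcut : (1 - p) ^ (m * (j - m)) ≤
      (1 - p) ^ ((j : ℝ) - g / 2) * exp (-(4 * (m - 1) * u)) := by
    set D : ℝ := m * (j - m) - (j - g / 2)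
    have hD : (m - 1) * (j / 2) ≤ D := by
      simp only [D]
      nlinarith [mul_le_mul_of_nonneg_left hgj' (by linarith : (0 : ℝ) ≤ m - 1),
        mul_le_mul_of_nonneg_left hmg'.le (by linarith : (0 : ℝ) ≤ m)]
    rw [← rpow_natCast, Nat.cast_mul, Nat.cast_sub (by omega),
      show (m : ℝ) * (j - m) = (j - g / 2) + D by ring, rpow_add (by linarith)]
    gcongr
    calc (1 - p) ^ D ≤ exp (-p) ^ D :=
          rpow_le_rpow (by linarith) (one_sub_le_exp_neg p) (by nlinarith)
      _ = exp (-p * D) := (exp_mul _ _).symm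
      _ ≤ exp (-(4 * (m - 1) * u)) := by
        have hpj : p * ((m - 1) * (j / 2)) = g * p * ((m - 1) * u) / 2 := by rw [hj]; ring
        rw [exp_le_exp]
        nlinarith [mul_le_mul_of_nonneg_left hD hp,
          mul_le_mul_of_nonneg_right hgp (by nlinarith : (0 : ℝ) ≤ (m - 1) * u)]
  have hchoose : (j.choose m : ℝ) ≤ (4 * exp u) ^ m := by
    refine (Nat.choose_le_exp_one_mul_div_pow j m).trans (pow_le_pow_left₀ (by positivity) ?_ m)
    have heu : exp 1 * u ≤ exp u := by
      calc exp 1 * u ≤ exp 1 * exp (u - 1) := by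
            gcongr
            linarith [add_one_le_exp (u - 1)]
        _ = exp u := by rw [← exp_add]; ring_nf
    rw [div_le_iff₀ (by linarith), hj]
    nlinarith [mul_le_mul_of_nonneg_left hgm' (by positivity : (0 : ℝ) ≤ exp 1 * u)]
  calc (j.choose m : ℝ) * (1 - p) ^ (m * (j - m))
      ≤ (4 * exp u) ^ m * ((1 - p) ^ ((j : ℝ) - g / 2) * exp (-(4 * (m - 1) * u))) :=
        mul_le_mul hchoose hcut (by positivity) (by positivity)
    _ = (1 - p) ^ ((j : ℝ) - g / 2) * ((4 * exp u) ^ m * exp (-(4 * (m - 1) * u))) := by ring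
    _ ≤ (1 - p) ^ ((j : ℝ) - g / 2) * (exp 4 * (1 / 5) ^ m) :=
        mul_le_mul_of_nonneg_left (four_mul_exp_pow_mul_exp_le hu hm) (by positivity)

lemma sum_Ico_three_one_fifth_pow_le (n : ℕ) : ∑ m ∈ Ico 3 n, (1 / 5 : ℝ) ^ m ≤ 1 / 100 :=
  (geom_sum_Ico_le_of_lt_one (by norm_num) (by norm_num)).trans_eq (by norm_num)

lemma exp_four_le_hundred : exp 4 ≤ 100 := by
  rw [show (4 : ℝ) = (4 : ℕ) by norm_num, ← exp_one_pow]
  calc exp 1 ^ 4 ≤ 3 ^ 4 := pow_le_pow_left₀ (exp_pos 1).le exp_one_lt_three.le 4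
    _ ≤ 100 := by norm_num

lemma sum_choose_mul_one_sub_pow_le {j g A : ℕ} {p : ℝ} (hp : 0 ≤ p) (hp1 : p < 1)
    (hgp : 8 ≤ g * p) (hgj : g ≤ j) (hA : 3 ≤ A) (hgA : g ≤ 4 * A) :
    ∑ m ∈ (range (j + 1)).filter (fun m => A ≤ m ∧ 2 * m ≤ j),
        (j.choose m : ℝ) * (1 - p) ^ (m * (j - m)) ≤
      (1 - p) ^ ((j : ℝ) - g / 2) +
        ∑ m ∈ (range (j + 1)).filter (fun m => g ≤ 2 * m ∧ 2 * m ≤ j),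
          (2 * exp 1 * j * (1 - p) ^ ((j : ℝ) / 2) / g) ^ m := by
  set M := (range (j + 1)).filter (fun m => A ≤ m ∧ 2 * m ≤ j)
  have hg : 0 < g := by
    rcases Nat.eq_zero_or_pos g with rfl | hg
    · norm_num at hgp
    · exact hg
  rw [← sum_filter_not_add_sum_filter M (fun m => g ≤ 2 * m)]
  refine add_le_add ?_ ?_
  · calc ∑ m ∈ M.filter (fun m => ¬ g ≤ 2 * m), (j.choose m : ℝ) * (1 - p) ^ (m * (j - m))
        ≤ ∑ m ∈ M.filter (fun m => ¬ g ≤ 2 * m),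
            (1 - p) ^ ((j : ℝ) - g / 2) * (exp 4 * (1 / 5) ^ m) := by
          refine sum_le_sum fun m hm => ?_
          simp only [M, mem_filter, mem_range] at hm
          exact choose_mul_one_sub_pow_le_of_two_mul_lt hp hp1 hgp (by omega) (by omega)
            (by omega) hgj
      _ = (1 - p) ^ ((j : ℝ) - g / 2) *
            (exp 4 * ∑ m ∈ M.filter (fun m => ¬ g ≤ 2 * m), (1 / 5 : ℝ) ^ m) := by
          rw [mul_sum, mul_sum]
      _ ≤ (1 - p) ^ ((j : ℝ) - g / 2) * (100 * (1 / 100)) := by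
          gcongr
          · exact exp_four_le_hundred
          · refine (sum_le_sum_of_subset_of_nonneg (fun m hm => ?_)
              fun _ _ _ => by positivity).trans (sum_Ico_three_one_fifth_pow_le (j + 1))
            simp only [M, mem_filter, mem_range] at hm
            simp only [mem_Ico]
            omega
      _ = (1 - p) ^ ((j : ℝ) - g / 2) := by norm_num
  · refine (sum_le_sum fun m hm => ?_).trans
      (sum_le_sum_of_subset_of_nonneg (fun m hm => ?_) fun _ _ _ => by positivity)
    · simp only [M, mem_filter, mem_range] at hm
      exact choose_mul_one_sub_pow_le_of_le_two_mul hp hp1 hg hm.2 hm.1.2.2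
    · simp only [M, mem_filter, mem_range] at hm ⊢
      exact ⟨hm.1.1, hm.2, hm.1.2.2⟩

theorem stmt18_general (j g : ℕ) (hgj : g ≤ j) (p : ℝ) (hp : 0 < p) (hp1 : p < 1)
    (hgp : 8 ≤ (g : ℝ) * p) :
    erMeasure j {ω | ∀ c : (erGraph j p ω).ConnectedComponent,
        (c.supp.ncard : ℝ) < (j : ℝ) - g / 2}
      ≤ ENNReal.ofReal ((1 - p) ^ ((j : ℝ) - g / 2) +
          ∑ m ∈ (Finset.range (j + 1)).filter (fun m => g ≤ 2 * m ∧ 2 * m ≤ j),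
            (2 * Real.exp 1 * j * (1 - p) ^ ((j : ℝ) / 2) / g) ^ m) := by
  have hg9 : 9 ≤ g := by
    by_contra! h
    have : (g : ℝ) ≤ 8 := by exact_mod_cast (by omega : g ≤ 8)
    nlinarith
  -- `C` is the largest integer below `j - g/2`, and `A = ⌈g/4⌉` satisfies `2A + C ≤ j + 1`
  set C := (2 * j - g - 1) / 2
  set A := (g + 3) / 4
  have hcover : {ω : ErSpace j | ∀ c : (erGraph j p ω).ConnectedComponent,
      (c.supp.ncard : ℝ) < (j : ℝ) - g / 2} ⊆
      ⋃ m ∈ (range (j + 1)).filter (fun m => A ≤ m ∧ 2 * m ≤ j),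
        ⋃ S ∈ powersetCard m (univ : Finset (Fin j)), noEdgeLeaving j p S := by
    intro ω hω
    have hC : ∀ c : (erGraph j p ω).ConnectedComponent, c.supp.ncard ≤ C := fun c => by
      have : ((2 * c.supp.ncard + g : ℕ) : ℝ) < (2 * j : ℕ) := by push_cast; linarith [hω c]
      have : 2 * c.supp.ncard + g < 2 * j := by exact_mod_cast this
      omega
    obtain ⟨S, hAS, hSj, hS⟩ := (erGraph j p ω).exists_finset_not_adj_compl (A := A) (C := C)
      (by omega) (by rw [Fintype.card_fin]; omega) hC
    rw [Fintype.card_fin] at hSj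
    simp only [Set.mem_iUnion, mem_filter, mem_range, mem_powersetCard, exists_prop]
    exact ⟨#S, ⟨by omega, hAS, hSj⟩, S, ⟨subset_univ S, rfl⟩, hS⟩
  calc _ ≤ _ := measure_mono hcover
    _ ≤ _ := erMeasure_biUnion_noEdgeLeaving_le hp.le hp1.le _
    _ ≤ _ := ENNReal.ofReal_le_ofReal
        (sum_choose_mul_one_sub_pow_le hp.le hp1 hgp hgj (by omega) (by omega))

/-- For integers `j ≥ g ≥ 2` and `0 < p < 1` with `g·p ≥ 8`, the probability that
`G(j, p)` has no connected component on at least `j − g/2` vertices is at most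
`(1−p)^{j−g/2} + Σ_{g/2 ≤ m ≤ j/2} (2e·j·(1−p)^{j/2}/g)^m`. -/
theorem stmt18 (j g : ℕ) (hg : 2 ≤ g) (hgj : g ≤ j) (p : ℝ) (hp : 0 < p) (hp1 : p < 1)
    (hgp : 8 ≤ (g : ℝ) * p) :
    erMeasure j {ω | ∀ c : (erGraph j p ω).ConnectedComponent,
        (c.supp.ncard : ℝ) < (j : ℝ) - g / 2}
      ≤ ENNReal.ofReal ((1 - p) ^ ((j : ℝ) - g / 2) +
          ∑ m ∈ (Finset.range (j + 1)).filter (fun m => g ≤ 2 * m ∧ 2 * m ≤ j),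
            (2 * Real.exp 1 * j * (1 - p) ^ ((j : ℝ) / 2) / g) ^ m) :=
  stmt18_general j g hgj p hp hp1 hgp
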